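/- arXiv:2403.06152 — 2 statements merged into one kernel-verified Lean document; each statement's English description precedes it below -/
import Mathlib

section
/- Let v = (I−A)^{-1}B − 𝟙_n ≠ 0 and c ∈ ℝ^n. The unconstrained minimizer of u ↦ ‖v u + (I−A)^{-1}c‖₂² is u* = −v^⊤(I−A)^{-1}c / ‖v‖₂², and the corresponding optimal state x* = (I−A)^{-1}(Bu* + c) satisfies x* = (I − A − (1/(v^⊤𝟙_n)) B v^⊤)^{-1} c whenever v^⊤𝟙_n ≠ 0 and the latter matrix is invertible. -/
/-!
The cost `u ↦ ∑ᵢ (u vᵢ + wᵢ)²` is the quadratic `u² (v⬝v) + 2u (v⬝w) + w⬝w`, whose minimum is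
at `u* = -(v⬝w)/(v⬝v)`; the excess cost at any `u` is `(u - u*)² (v⬝v) ≥ 0`.

For the steady state `x = (I-A)⁻¹(u* B + c)`, the relation `(I-A)⁻¹B = v + 𝟙` and the
optimality condition `(v⬝v) u* = -(v⬝w)` give `v⬝x = u* (v⬝𝟙)`. So the optimal input is the
linear state feedback `u* = (v⬝𝟙)⁻¹ v⬝x`, and substituting it into `(I-A)x = u* B + c` gives
`(I - A - (v⬝𝟙)⁻¹ B vᵀ) x = c`.
-/

open Matrix Finset

section Quadratic

variable {ι : Type*} [Fintype ι]

theorem sum_sq_mul_add (u : ℝ) (v w : ι → ℝ) :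
    ∑ i, (u * v i + w i) ^ 2 = u ^ 2 * (v ⬝ᵥ v) + 2 * u * (v ⬝ᵥ w) + w ⬝ᵥ w := by
  simp only [dotProduct, mul_sum, ← sum_add_distrib]
  exact sum_congr rfl fun i _ => by ring

/-- For `v = 0` both sides vanish, the left one through `0 / 0 = 0`. -/
theorem dotProduct_self_mul_div_dotProduct_self (v w : ι → ℝ) :
    v ⬝ᵥ v * (v ⬝ᵥ w / v ⬝ᵥ v) = v ⬝ᵥ w := by
  by_cases hv : v = 0
  · simp [hv]
  · exact mul_div_cancel₀ _ (dotProduct_self_eq_zero.not.mpr hv)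

theorem sum_sq_mul_add_eq_argmin_add (u : ℝ) (v w : ι → ℝ) :
    ∑ i, (u * v i + w i) ^ 2 =
      ∑ i, (-(v ⬝ᵥ w) / (v ⬝ᵥ v) * v i + w i) ^ 2 +
        (u + (v ⬝ᵥ w) / (v ⬝ᵥ v)) ^ 2 * (v ⬝ᵥ v) := by
  have h := dotProduct_self_mul_div_dotProduct_self v w
  rw [sum_sq_mul_add, sum_sq_mul_add]
  linear_combination (-2 * u - 2 * (v ⬝ᵥ w / v ⬝ᵥ v)) * h

theorem sum_sq_argmin_le (u : ℝ) (v w : ι → ℝ) :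
    ∑ i, (-(v ⬝ᵥ w) / (v ⬝ᵥ v) * v i + w i) ^ 2 ≤ ∑ i, (u * v i + w i) ^ 2 := by
  rw [sum_sq_mul_add_eq_argmin_add u]
  have : 0 ≤ v ⬝ᵥ v := by simpa using dotProduct_self_star_nonneg v
  nlinarith [sq_nonneg (u + (v ⬝ᵥ w) / (v ⬝ᵥ v))]

theorem dotProduct_mulVec_argmin_smul_add {P : Matrix ι ι ℝ} {B c v : ι → ℝ}
    (hv : v = P *ᵥ B - 1) :
    v ⬝ᵥ (P *ᵥ ((-(v ⬝ᵥ (P *ᵥ c)) / (v ⬝ᵥ v)) • B + c)) =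
      -(v ⬝ᵥ (P *ᵥ c)) / (v ⬝ᵥ v) * (v ⬝ᵥ 1) := by
  have hPB : P *ᵥ B = v + 1 := by rw [hv, sub_add_cancel]
  have h := dotProduct_self_mul_div_dotProduct_self v (P *ᵥ c)
  rw [mulVec_add, mulVec_smul, hPB, dotProduct_add, dotProduct_smul, dotProduct_add, smul_eq_mul]
  linear_combination (-1 : ℝ) * h

end Quadratic

section Feedback

variable {K ι : Type*} [Field K] [Fintype ι]

theorem eq_inv_mulVec_of_mulVec_eq [DecidableEq ι] {N : Matrix ι ι K} (hN : IsUnit N)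
    {x c : ι → K} (h : N *ᵥ x = c) : x = N⁻¹ *ᵥ c := by
  have := hN.invertible
  exact (inv_mulVec_eq_vec h.symm).symm

theorem sub_vecMulVec_mulVec_eq {M : Matrix ι ι K} {B c v x : ι → K} {u s : K} (hs : s ≠ 0)
    (hMx : M *ᵥ x = u • B + c) (hvx : v ⬝ᵥ x = u * s) :
    (M - s⁻¹ • vecMulVec B v) *ᵥ x = c := by
  rw [sub_mulVec, smul_mulVec, vecMulVec_mulVec, hMx, hvx, op_smul_eq_smul, smul_smul,
    mul_comm u s, inv_mul_cancel_left₀ hs, add_sub_cancel_left]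

end Feedback

theorem optimal_steadyState_closedForm_general {n : ℕ}
    (A : Matrix (Fin n) (Fin n) ℝ) (B c : Fin n → ℝ)
    (hA : IsUnit (1 - A))
    (v : Fin n → ℝ)
    (hv : v = (1 - A)⁻¹ *ᵥ B - 1) :
    (∀ u : ℝ, ∑ i, ((-(v ⬝ᵥ ((1 - A)⁻¹ *ᵥ c)) / (v ⬝ᵥ v)) * v i +
          ((1 - A)⁻¹ *ᵥ c) i) ^ 2 ≤ ∑ i, (u * v i + ((1 - A)⁻¹ *ᵥ c) i) ^ 2) ∧
    (v ⬝ᵥ (1 : Fin n → ℝ) ≠ 0 →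
      IsUnit (1 - A - (v ⬝ᵥ (1 : Fin n → ℝ))⁻¹ • Matrix.vecMulVec B v) →
      (1 - A)⁻¹ *ᵥ ((-(v ⬝ᵥ ((1 - A)⁻¹ *ᵥ c)) / (v ⬝ᵥ v)) • B + c) =
        (1 - A - (v ⬝ᵥ (1 : Fin n → ℝ))⁻¹ • Matrix.vecMulVec B v)⁻¹ *ᵥ c) := by
  refine ⟨fun u => sum_sq_argmin_le u v _, fun hs hN => ?_⟩
  have := hA.invertible
  refine eq_inv_mulVec_of_mulVec_eq hN
    (sub_vecMulVec_mulVec_eq hs ?_ (dotProduct_mulVec_argmin_smul_add hv))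
  rw [mulVec_mulVec, mul_inv_of_invertible, one_mulVec]

/-- With `v = (I-A)⁻¹B - 𝟙 ≠ 0`, the map `u ↦ ‖v u + (I-A)⁻¹ c‖₂²` is minimized at
`u* = -vᵀ(I-A)⁻¹c / ‖v‖²`, and the corresponding state `x* = (I-A)⁻¹(Bu* + c)` equals
`(I - A - (vᵀ𝟙)⁻¹ B vᵀ)⁻¹ c` whenever `vᵀ𝟙 ≠ 0` and that matrix is invertible. -/
theorem optimal_steadyState_closedForm {n : ℕ}
    (A : Matrix (Fin n) (Fin n) ℝ) (B c : Fin n → ℝ)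
    (hA : IsUnit (1 - A))
    (v : Fin n → ℝ)
    (hv : v = (1 - A)⁻¹ *ᵥ B - 1)
    (hv0 : v ≠ 0) :
    (∀ u : ℝ, ∑ i, ((-(v ⬝ᵥ ((1 - A)⁻¹ *ᵥ c)) / (v ⬝ᵥ v)) * v i +
          ((1 - A)⁻¹ *ᵥ c) i) ^ 2 ≤ ∑ i, (u * v i + ((1 - A)⁻¹ *ᵥ c) i) ^ 2) ∧
    (v ⬝ᵥ (1 : Fin n → ℝ) ≠ 0 →
      IsUnit (1 - A - (v ⬝ᵥ (1 : Fin n → ℝ))⁻¹ • Matrix.vecMulVec B v) →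
      (1 - A)⁻¹ *ᵥ ((-(v ⬝ᵥ ((1 - A)⁻¹ *ᵥ c)) / (v ⬝ᵥ v)) • B + c) =
        (1 - A - (v ⬝ᵥ (1 : Fin n → ℝ))⁻¹ • Matrix.vecMulVec B v)⁻¹ *ᵥ c) :=
  optimal_steadyState_closedForm_general A B c hA v hv
end

section
/- If ρ((I−Λ)F) < 1 where F is row-stochastic and Λ = diag(λ_i) with λ_i ∈ [0,1], then the matrix I − (I−Λ)F is invertible and (I − (I−Λ)F)^{-1} Λ is row-stochastic (nonnegative with all row sums equal to 1). -/
/-!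
Write `M = (I - Λ)F`: it is entrywise nonnegative with row sums `1 - λᵢ`. Since `ρ(M) < 1`, the
number `1` is not in the spectrum, so `I - M` is invertible, and Gelfand's formula gives `Mᵏ → 0`,
so `(I - M)⁻¹ = ∑ₖ Mᵏ` is entrywise nonnegative. Applying `(I - M)⁻¹(I - M) = I` to the all-ones
vector `𝟙` and using `M𝟙 = 𝟙 - λ` gives `(I - M)⁻¹λ = 𝟙`: the rows of `(I - M)⁻¹Λ` sum to one.
-/

open Matrix Finset Filter Topology

section BanachAlgebra

variable {A : Type*} [NormedRing A] [NormedAlgebra ℂ A] [CompleteSpace A]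

theorem tendsto_pow_atTop_nhds_zero_of_spectralRadius_lt_one {a : A}
    (ha : spectralRadius ℂ a < 1) : Tendsto (a ^ ·) atTop (𝓝 0) := by
  obtain ⟨r, har, hr1⟩ := ENNReal.lt_iff_exists_nnreal_btwn.mp ha
  have hle : ∀ᶠ k : ℕ in atTop, ‖a ^ k‖₊ ≤ r ^ k := by
    filter_upwards [(spectrum.pow_nnnorm_pow_one_div_tendsto_nhds_spectralRadius a).eventually_lt_const
      har, eventually_gt_atTop 0] with k hk hk0
    rw [one_div, ENNReal.rpow_inv_lt_iff (by positivity), ENNReal.rpow_natCast] at hk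
    exact_mod_cast hk.le
  refine squeeze_zero_norm' (hle.mono fun k hk => ?_)
    (tendsto_pow_atTop_nhds_zero_of_lt_one r.2 (by exact_mod_cast hr1))
  exact_mod_cast hk

theorem tendsto_pow_atTop_nhds_zero_of_forall_spectrum_norm_lt_one {a : A}
    (ha : ∀ μ ∈ spectrum ℂ a, ‖μ‖ < 1) : Tendsto (a ^ ·) atTop (𝓝 0) := by
  rcases subsingleton_or_nontrivial A with hA | hA
  · exact tendsto_const_nhds.congr fun _ => Subsingleton.elim _ _
  · refine tendsto_pow_atTop_nhds_zero_of_spectralRadius_lt_one ?_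
    exact_mod_cast spectrum.spectralRadius_lt_of_forall_lt a (r := 1) fun μ hμ => by
      exact_mod_cast ha μ hμ

end BanachAlgebra

theorem tendsto_geom_sum_of_mul_one_sub_eq_one {R : Type*} [Ring R] [TopologicalSpace R]
    [IsTopologicalRing R] {a b : R} (hb : b * (1 - a) = 1) (ha : Tendsto (a ^ ·) atTop (𝓝 0)) :
    Tendsto (fun N => ∑ k ∈ range N, a ^ k) atTop (𝓝 b) := by
  have hsum : ∀ N, ∑ k ∈ range N, a ^ k = b - b * a ^ N := fun N => by
    rw [← mul_one_sub, ← mul_neg_geom_sum, ← mul_assoc, hb, one_mul]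
  simp only [hsum]
  simpa using tendsto_const_nhds.sub (tendsto_const_nhds.mul ha)

namespace Matrix

variable {ι : Type*} [Fintype ι] [DecidableEq ι]

theorem isUnit_of_isUnit_map {K S : Type*} [Field K] [CommRing S] [Nontrivial S] (f : K →+* S)
    {M : Matrix ι ι K} (h : IsUnit (M.map f)) : IsUnit M := by
  rw [isUnit_iff_isUnit_det, ← RingHom.mapMatrix_apply, ← RingHom.map_det, isUnit_map_iff] at h
  exact (isUnit_iff_isUnit_det M).mpr h

theorem isUnit_one_sub_of_forall_spectrum_map_ofReal_norm_lt_one {M : Matrix ι ι ℝ}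
    (h : ∀ μ ∈ spectrum ℂ (M.map Complex.ofReal), ‖μ‖ < 1) : IsUnit (1 - M) := by
  have h1 : (1 : ℂ) ∉ spectrum ℂ (M.map Complex.ofReal) := fun h1 => by simpa using h 1 h1
  rw [spectrum.notMem_iff, map_one] at h1
  refine isUnit_of_isUnit_map Complex.ofRealHom ?_
  rwa [← RingHom.mapMatrix_apply, map_sub, map_one]

section

-- Any Banach algebra norm would do; this one induces the entrywise topology.
attribute [local instance] Matrix.linftyOpNormedRing Matrix.linftyOpNormedAlgebra

theorem tendsto_pow_of_forall_spectrum_map_ofReal_norm_lt_one {M : Matrix ι ι ℝ}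
    (h : ∀ μ ∈ spectrum ℂ (M.map Complex.ofReal), ‖μ‖ < 1) : Tendsto (M ^ ·) atTop (𝓝 0) := by
  have hC := (continuous_id.matrix_map Complex.continuous_re).tendsto 0 |>.comp
    (tendsto_pow_atTop_nhds_zero_of_forall_spectrum_norm_lt_one h)
  convert hC using 1
  · ext k : 1
    have hmap : M.map Complex.ofReal ^ k = (M ^ k).map Complex.ofReal :=
      (map_pow Complex.ofRealHom.mapMatrix M k).symm
    ext i j
    simp [hmap]
  · simp

end

theorem apply_nonneg_of_mul_one_sub_eq_one {R : Type*} [Ring R] [PartialOrder R] [IsOrderedRing R]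
    [TopologicalSpace R] [IsTopologicalRing R] [OrderClosedTopology R]
    {M B : Matrix ι ι R} (hM : ∀ i j, 0 ≤ M i j) (hpow : Tendsto (M ^ ·) atTop (𝓝 0))
    (hB : B * (1 - M) = 1) (i j : ι) : 0 ≤ B i j := by
  have hlim := ((continuous_id.matrix_elem i j).tendsto B).comp
    (tendsto_geom_sum_of_mul_one_sub_eq_one hB hpow)
  refine ge_of_tendsto' hlim fun N => ?_
  simp only [Function.comp_apply, id, sum_apply]
  exact sum_nonneg fun k _ => pow_apply_nonneg hM k i j

theorem mulVec_eq_of_mul_one_sub_eq_one {R : Type*} [Ring R] {M B : Matrix ι ι R}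
    {v : ι → R} (hB : B * (1 - M) = 1) (hM : M *ᵥ 1 = 1 - v) : B *ᵥ v = 1 := by
  calc B *ᵥ v = B *ᵥ ((1 - M) *ᵥ 1) := by rw [sub_mulVec, one_mulVec, hM, sub_sub_cancel]
    _ = 1 := by rw [mulVec_mulVec, hB, one_mulVec]

end Matrix

/-- If `ρ((I-Λ)F) < 1` with `F` row-stochastic and `λᵢ ∈ [0,1]`, then
`I - (I-Λ)F` is invertible and `(I - (I-Λ)F)⁻¹ Λ` is row-stochastic
(nonnegative with all row sums equal to 1). -/
theorem steadyState_influence_row_stochastic {n : ℕ}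
    (F : Matrix (Fin n) (Fin n) ℝ) (lam : Fin n → ℝ)
    (hF : ∀ i j, 0 ≤ F i j) (hFrow : ∀ i, ∑ j, F i j = 1)
    (hlam : ∀ i, lam i ∈ Set.Icc (0:ℝ) 1)
    (hρ : ∀ μ ∈ spectrum ℂ (((1 - Matrix.diagonal lam) * F).map Complex.ofReal), ‖μ‖ < 1) :
    IsUnit (1 - (1 - Matrix.diagonal lam) * F) ∧
    (∀ i j, 0 ≤ ((1 - (1 - Matrix.diagonal lam) * F)⁻¹ * Matrix.diagonal lam) i j) ∧
    ∀ i, ∑ j, ((1 - (1 - Matrix.diagonal lam) * F)⁻¹ * Matrix.diagonal lam) i j = 1 := by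
  set M := (1 - diagonal lam) * F with hM
  have hM_nonneg : ∀ i j, 0 ≤ M i j := fun i j => by
    rw [hM, ← diagonal_one, diagonal_sub, diagonal_mul]
    exact mul_nonneg (sub_nonneg.mpr (hlam i).2) (hF i j)
  have hM_row : M *ᵥ 1 = 1 - lam := by
    have hF1 : F *ᵥ 1 = 1 :=
      one_vecMul_of_mem_rowStochastic (mem_rowStochastic_iff_sum.mpr ⟨hF, hFrow⟩)
    rw [hM, ← mulVec_mulVec, hF1, sub_mulVec, one_mulVec]
    ext i; simp [mulVec_diagonal]
  have hunit := isUnit_one_sub_of_forall_spectrum_map_ofReal_norm_lt_one hρ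
  have hinv : (1 - M)⁻¹ * (1 - M) = 1 := nonsing_inv_mul _ ((isUnit_iff_isUnit_det _).mp hunit)
  have hB_nonneg := apply_nonneg_of_mul_one_sub_eq_one hM_nonneg
    (tendsto_pow_of_forall_spectrum_map_ofReal_norm_lt_one hρ) hinv
  refine ⟨hunit, mem_rowStochastic_iff_sum.mp ⟨fun i j => ?_, ?_⟩⟩
  · rw [mul_diagonal]
    exact mul_nonneg (hB_nonneg i j) (hlam j).1
  · have hdiag : diagonal lam *ᵥ 1 = lam := by ext i; simp [mulVec_diagonal]
    rw [← mulVec_mulVec, hdiag, mulVec_eq_of_mul_one_sub_eq_one hinv hM_row]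
end
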